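/- For N ∈ ℕ with N ≥ 2, let Ẽ_N = {±(2^{k₁} + ⋯ + 2^{k_N}) : k₁ > k₂ > ⋯ > k_N, k_i ∈ ℤ} and Ẽ_{N−1} the analogous set with N−1 exponents. Then there exists a constant c_N > 0 such that for all distinct x, y ∈ Ẽ_N, |x − y| ≥ c_N · dist(x, Ẽ_{N−1}). -/
import Mathlib


open Real Set

/-- The lacunary set of order `N`:
`Ẽ_N = {±(2^{k₁} + ⋯ + 2^{k_N}) : k₁ > k₂ > ⋯ > k_N, k_i ∈ ℤ}`. -/
def Etilde (N : ℕ) : Set ℝ :=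
  {x | ∃ k : Fin N → ℤ, StrictAnti k ∧
    (x = ∑ i, (2:ℝ) ^ (k i) ∨ x = -∑ i, (2:ℝ) ^ (k i))}



lemma mono_sub (a b c : ℤ) (hab : a ≤ b) (hc : 0 ≤ c) :
    (2:ℝ)^a - 2^(a - c) ≤ 2^b - 2^(b - c) := by
  have h1 : (2:ℝ)^a - 2^(a-c) = 2^(a-c) * (2^c - 1) := by
    rw [mul_sub, mul_one, ← zpow_add₀ (two_ne_zero)]; ring_nf
  have h2 : (2:ℝ)^b - 2^(b-c) = 2^(b-c) * (2^c - 1) := by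
    rw [mul_sub, mul_one, ← zpow_add₀ (two_ne_zero)]; ring_nf
  rw [h1, h2]
  have : (1:ℝ) ≤ 2^c := one_le_zpow₀ one_le_two hc
  have := zpow_le_zpow_right₀ (one_le_two (α := ℝ)) (sub_le_sub_right hab c)
  nlinarith [zpow_pos (show (0:ℝ) < 2 by norm_num) (a - c)]

lemma sum_le : ∀ (M : ℕ) (k : Fin (M+1) → ℤ), StrictAnti k →
    ∑ i, (2:ℝ) ^ (k i) ≤ 2 ^ (k 0 + 1) - 2 ^ (k 0 - (M:ℤ)) := by
  intro M
  induction M with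
  | zero =>
    intro k _
    rw [Fin.sum_univ_one]
    have h1 : (2:ℝ)^(k 0 + 1) = 2^(k 0) * 2 := zpow_add_one₀ two_ne_zero _
    have h2 : k 0 - ((0:ℕ):ℤ) = k 0 := by simp
    rw [h2, h1]; linarith
  | succ M ih =>
    intro k hk
    rw [Fin.sum_univ_succ]
    have hanti : StrictAnti (k ∘ Fin.succ) :=
      hk.comp_strictMono Fin.strictMono_succ
    have hih := ih (k ∘ Fin.succ) hanti
    have hcomp0 : (k ∘ Fin.succ) 0 = k 1 := rfl
    rw [hcomp0] at hih
    have h10 : k 1 + 1 ≤ k 0 := by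
      have := hk (show (0 : Fin (M+2)) < 1 by simp [Fin.lt_def])
      omega
    have hmono := mono_sub (k 1 + 1) (k 0) ((M:ℤ)+1) h10 (by positivity)
    have e0 : k 1 + 1 - ((M:ℤ)+1) = k 1 - (M:ℤ) := by ring
    rw [e0] at hmono
    have e1 : (2:ℝ)^(k 0 + 1) = 2^(k 0) * 2 := zpow_add_one₀ two_ne_zero _
    have e2 : k 0 - ((M+1:ℕ):ℤ) = k 0 - ((M:ℤ)+1) := by push_cast; ring
    have hih' : ∑ i : Fin (M+1), (2:ℝ)^(k i.succ) ≤ 2^(k 1 + 1) - 2^(k 1 - (M:ℤ)) := by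
      simpa using hih
    rw [e2, e1]
    have := hih'.trans hmono
    linarith

lemma key : ∀ (M : ℕ) (k l : Fin (M+1) → ℤ), StrictAnti k → StrictAnti l →
    |∑ i, (2:ℝ)^(k i) - ∑ i, (2:ℝ)^(l i)| < 2 ^ (k (Fin.last M) - (M:ℤ) - 1) →
    ∑ i, (2:ℝ)^(k i) = ∑ i, (2:ℝ)^(l i) := by
  intro M
  induction M with
  | zero =>
    intro k l _ _ h
    simp only [Fin.sum_univ_succ, Fin.sum_univ_zero, add_zero] at h ⊢
    have hlast : k (Fin.last 0) = k 0 := rfl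
    rw [hlast] at h
    have hcast : k 0 - ((0:ℕ):ℤ) - 1 = k 0 - 1 := by simp
    rw [hcast] at h
    have h2 : (2:ℝ)^(k 0 - 1) * 2 = 2^(k 0) := by
      rw [← zpow_add_one₀ (two_ne_zero)]; norm_num
    rcases lt_trichotomy (k 0) (l 0) with hlt | heq | hgt
    · exfalso
      have h1 : (2:ℝ)^(k 0) * 2 ≤ 2^(l 0) := by
        rw [← zpow_add_one₀ (two_ne_zero)]
        exact zpow_le_zpow_right₀ one_le_two (by omega)
      have habs : (2:ℝ)^(l 0) - 2^(k 0) ≤ |2^(k 0) - 2^(l 0)| := by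
        rw [abs_sub_comm]; exact le_abs_self _
      have hpos := zpow_pos (show (0:ℝ) < 2 by norm_num) (k 0 - 1)
      have hpos2 := zpow_pos (show (0:ℝ) < 2 by norm_num) (k 0)
      nlinarith
    · rw [heq]
    · exfalso
      have h1 : (2:ℝ)^(l 0) ≤ 2^(k 0 - 1) := zpow_le_zpow_right₀ one_le_two (by omega)
      have habs : (2:ℝ)^(k 0) - 2^(l 0) ≤ |2^(k 0) - 2^(l 0)| := le_abs_self _
      nlinarith
  | succ M ih =>
    intro k l hk hl h
    have hka : StrictAnti (k ∘ Fin.succ) := hk.comp_strictMono Fin.strictMono_succ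
    have hla : StrictAnti (l ∘ Fin.succ) := hl.comp_strictMono Fin.strictMono_succ
    have hklast : k (Fin.last (M+1)) ≤ k 0 := hk.antitone (Fin.zero_le _)
    rw [Fin.sum_univ_succ (f := fun i => (2:ℝ)^(k i)),
        Fin.sum_univ_succ (f := fun i => (2:ℝ)^(l i))] at h ⊢
    have hcast : k (Fin.last (M+1)) - ((M+1:ℕ):ℤ) - 1 = k (Fin.last (M+1)) - (M:ℤ) - 2 := by
      push_cast; ring
    rw [hcast] at h
    have hx1 : (2:ℝ)^(k (Fin.last (M+1))) ≤ ∑ i : Fin (M+1), 2^(k i.succ) := by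
      have := Finset.single_le_sum (f := fun i : Fin (M+1) => (2:ℝ)^(k i.succ))
        (fun i _ => by positivity) (Finset.mem_univ (Fin.last M))
      simpa [Fin.succ_last] using this
    have hy1 : (2:ℝ)^(l 0) ≤ 2^(l 0) + ∑ i : Fin (M+1), 2^(l i.succ) := by
      have : (0:ℝ) ≤ ∑ i : Fin (M+1), 2^(l i.succ) :=
        Finset.sum_nonneg fun i _ => by positivity
      linarith
    rcases lt_trichotomy (k 0) (l 0) with hlt | heq | hgt
    · exfalso
      -- x ≤ 2^(k0+1) - 2^(k0 - (M+1)), y ≥ 2^(l0) ≥ 2^(k0+1)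
      have hxle : (2:ℝ)^(k 0) + ∑ i : Fin (M+1), 2^(k i.succ)
          ≤ 2^(k 0 + 1) - 2^(k 0 - ((M:ℤ)+1)) := by
        have := sum_le (M+1) k hk
        rw [Fin.sum_univ_succ] at this
        have e : k 0 - ((M+1:ℕ):ℤ) = k 0 - ((M:ℤ)+1) := by push_cast; ring
        rwa [e] at this
      have hyge : (2:ℝ)^(k 0 + 1) ≤ 2^(l 0) :=
        zpow_le_zpow_right₀ one_le_two (by omega)
      have hdiff : (2:ℝ)^(k 0 - ((M:ℤ)+1))
          ≤ (2^(l 0) + ∑ i : Fin (M+1), 2^(l i.succ)) - (2^(k 0) + ∑ i : Fin (M+1), 2^(k i.succ)) := by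
        have : (0:ℝ) ≤ ∑ i : Fin (M+1), 2^(l i.succ) :=
          Finset.sum_nonneg fun i _ => by positivity
        linarith
      have habs : (2^(l 0) + ∑ i : Fin (M+1), (2:ℝ)^(l i.succ)) - (2^(k 0) + ∑ i : Fin (M+1), 2^(k i.succ))
          ≤ |2^(k 0) + ∑ i : Fin (M+1), (2:ℝ)^(k i.succ) - (2^(l 0) + ∑ i : Fin (M+1), 2^(l i.succ))| := by
        rw [abs_sub_comm]; exact le_abs_self _
      have hexp : (2:ℝ)^(k (Fin.last (M+1)) - (M:ℤ) - 2) ≤ 2^(k 0 - ((M:ℤ)+1)) :=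
        zpow_le_zpow_right₀ one_le_two (by omega)
      linarith
    · -- equal leading terms: use ih on tails
      have htail : ∑ i : Fin (M+1), (2:ℝ)^(k i.succ) = ∑ i : Fin (M+1), 2^(l i.succ) := by
        have happ := ih (k ∘ Fin.succ) (l ∘ Fin.succ) hka hla ?_
        · simpa using happ
        · have e : (k ∘ Fin.succ) (Fin.last M) = k (Fin.last (M+1)) := by
            simp [Function.comp, Fin.succ_last]
          rw [e]
          have hb : |∑ i : Fin (M+1), (2:ℝ)^(k i.succ) - ∑ i : Fin (M+1), 2^(l i.succ)|
              < 2^(k (Fin.last (M+1)) - (M:ℤ) - 2) := by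
            have : (2:ℝ)^(k 0) + ∑ i : Fin (M+1), 2^(k i.succ) - (2^(l 0) + ∑ i : Fin (M+1), 2^(l i.succ))
                = ∑ i : Fin (M+1), (2:ℝ)^(k i.succ) - ∑ i : Fin (M+1), 2^(l i.succ) := by
              rw [heq]; ring
            rwa [this] at h
          have hst : (2:ℝ)^(k (Fin.last (M+1)) - (M:ℤ) - 2) ≤ 2^(k (Fin.last (M+1)) - (M:ℤ) - 1) :=
            zpow_le_zpow_right₀ one_le_two (by omega)
          calc |∑ i : Fin (M+1), (2:ℝ)^(k i.succ) - ∑ i : Fin (M+1), 2^(l i.succ)|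
              < 2^(k (Fin.last (M+1)) - (M:ℤ) - 2) := hb
            _ ≤ _ := hst
      rw [heq, htail]
    · exfalso
      -- y ≤ 2^(l0+1) - 2^(l0-(M+1)) ≤ 2^(k0) - 2^(k0-(M+2)), x ≥ 2^(k0)
      have hyle : (2:ℝ)^(l 0) + ∑ i : Fin (M+1), 2^(l i.succ)
          ≤ 2^(l 0 + 1) - 2^(l 0 - ((M:ℤ)+1)) := by
        have := sum_le (M+1) l hl
        rw [Fin.sum_univ_succ] at this
        have e : l 0 - ((M+1:ℕ):ℤ) = l 0 - ((M:ℤ)+1) := by push_cast; ring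
        rwa [e] at this
      have hmono := mono_sub (l 0 + 1) (k 0) ((M:ℤ)+2) (by omega) (by positivity)
      have e1 : l 0 + 1 - ((M:ℤ)+2) = l 0 - ((M:ℤ)+1) := by ring
      rw [e1] at hmono
      have hxge : (2:ℝ)^(k 0) ≤ 2^(k 0) + ∑ i : Fin (M+1), 2^(k i.succ) := by
        have : (0:ℝ) ≤ ∑ i : Fin (M+1), 2^(k i.succ) :=
          Finset.sum_nonneg fun i _ => by positivity
        linarith
      have habs : (2^(k 0) + ∑ i : Fin (M+1), (2:ℝ)^(k i.succ)) - (2^(l 0) + ∑ i : Fin (M+1), 2^(l i.succ))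
          ≤ |2^(k 0) + ∑ i : Fin (M+1), (2:ℝ)^(k i.succ) - (2^(l 0) + ∑ i : Fin (M+1), 2^(l i.succ))| :=
        le_abs_self _
      have hexp : (2:ℝ)^(k (Fin.last (M+1)) - (M:ℤ) - 2) ≤ 2^(k 0 - ((M:ℤ)+2)) :=
        zpow_le_zpow_right₀ one_le_two (by omega)
      linarith

/-- for `N ≥ 2`, the lacunary set `Ẽ_N` of order `N` is a successor of
`Ẽ_{N-1}`: there is `c_N > 0` such that `|x - y| ≥ c_N · dist(x, Ẽ_{N-1})` for all
distinct `x, y ∈ Ẽ_N`. -/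
theorem stmt17 (N : ℕ) (hN : 2 ≤ N) :
    ∃ c : ℝ, 0 < c ∧ ∀ x ∈ Etilde N, ∀ y ∈ Etilde N, x ≠ y →
      c * Metric.infDist x (Etilde (N - 1)) ≤ |x - y| := by
  obtain ⟨M, rfl⟩ : ∃ M, N = M + 1 := ⟨N - 1, by omega⟩
  simp only [Nat.add_sub_cancel]
  refine ⟨(2:ℝ) ^ (-(M:ℤ) - 1), by positivity, ?_⟩
  rintro x ⟨k, hk, hx⟩ y ⟨l, hl, hy⟩ hxy
  have hcs : StrictAnti (k ∘ Fin.castSucc) := hk.comp_strictMono Fin.strictMono_castSucc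
  have hsplit : ∑ i : Fin (M+1), (2:ℝ)^(k i)
      = ∑ i : Fin M, (2:ℝ)^(k i.castSucc) + 2^(k (Fin.last M)) := by
    rw [Fin.sum_univ_castSucc]
  have hdist : Metric.infDist x (Etilde M) ≤ (2:ℝ)^(k (Fin.last M)) := by
    rcases hx with h | h
    · have hz : (∑ i : Fin M, (2:ℝ)^(k i.castSucc)) ∈ Etilde M :=
        ⟨k ∘ Fin.castSucc, hcs, Or.inl rfl⟩
      have := Metric.infDist_le_dist_of_mem (x := x) hz
      rw [Real.dist_eq] at this
      have hxz : x - ∑ i : Fin M, (2:ℝ)^(k i.castSucc) = 2^(k (Fin.last M)) := by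
        rw [h, hsplit]; ring
      rwa [hxz, abs_of_pos (by positivity)] at this
    · have hz : (-∑ i : Fin M, (2:ℝ)^(k i.castSucc)) ∈ Etilde M :=
        ⟨k ∘ Fin.castSucc, hcs, Or.inr rfl⟩
      have := Metric.infDist_le_dist_of_mem (x := x) hz
      rw [Real.dist_eq] at this
      have hxz : x - (-∑ i : Fin M, (2:ℝ)^(k i.castSucc)) = -2^(k (Fin.last M)) := by
        rw [h, hsplit]; ring
      rw [hxz, abs_neg, abs_of_pos (by positivity)] at this
      exact this
  have hkx : (2:ℝ)^(k (Fin.last M)) ≤ ∑ i : Fin (M+1), (2:ℝ)^(k i) :=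
    Finset.single_le_sum (f := fun i : Fin (M+1) => (2:ℝ)^(k i))
      (fun i _ => by positivity) (Finset.mem_univ (Fin.last M))
  have hly : (0:ℝ) < ∑ i : Fin (M+1), (2:ℝ)^(l i) :=
    Finset.sum_pos (fun i _ => by positivity) ⟨0, Finset.mem_univ 0⟩
  have hthr : (2:ℝ)^(k (Fin.last M) - (M:ℤ) - 1) ≤ 2^(k (Fin.last M)) :=
    zpow_le_zpow_right₀ one_le_two (by omega)
  have hmain : (2:ℝ)^(k (Fin.last M) - (M:ℤ) - 1) ≤ |x - y| := by
    rcases hx with h | h <;> rcases hy with h' | h' <;> subst h h'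
    · by_contra hcon
      push_neg at hcon
      exact hxy (key M k l hk hl hcon)
    · rw [sub_neg_eq_add, abs_of_pos (by positivity)]
      linarith
    · have : -∑ i : Fin (M+1), (2:ℝ)^(k i) - ∑ i : Fin (M+1), (2:ℝ)^(l i)
          = -(∑ i : Fin (M+1), (2:ℝ)^(k i) + ∑ i, (2:ℝ)^(l i)) := by ring
      rw [this, abs_neg, abs_of_pos (by positivity)]
      linarith
    · by_contra hcon
      push_neg at hcon
      have : -∑ i : Fin (M+1), (2:ℝ)^(k i) - -∑ i : Fin (M+1), (2:ℝ)^(l i)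
          = -(∑ i : Fin (M+1), (2:ℝ)^(k i) - ∑ i, (2:ℝ)^(l i)) := by ring
      rw [this, abs_neg] at hcon
      exact hxy (by rw [key M k l hk hl hcon])
  calc (2:ℝ)^(-(M:ℤ)-1) * Metric.infDist x (Etilde M)
      ≤ (2:ℝ)^(-(M:ℤ)-1) * 2^(k (Fin.last M)) :=
        mul_le_mul_of_nonneg_left hdist (by positivity)
    _ = 2^(k (Fin.last M) - (M:ℤ) - 1) := by
        rw [← zpow_add₀ (two_ne_zero : (2:ℝ) ≠ 0)]; ring_nf
    _ ≤ |x - y| := hmain
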